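/- arXiv:2502.08153 — 3 statements merged into one kernel-verified Lean document; each statement's English description precedes it below -/
import Mathlib

section
/- Let S be a discrete valuation ring with uniformizer u, fraction field Q, and residue field κ. Let B be a flat S-algebra such that B ⊗_S κ is reduced. Then every idempotent element x of B ⊗_S Q lies in the image of B (i.e., x ∈ B, regarding B as a subring of B ⊗_S Q via the injective extension map). -/
open scoped TensorProduct

/-- Let `S` be a discrete valuation ring with uniformizer `u`, fraction
field `Q`, and residue field `κ`. Let `B` be a flat `S`-algebra such that `B ⊗[S] κ` is
reduced. Then every idempotent element `x` of `B ⊗[S] Q` lies in the image of `B`. -/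
theorem stmt0 {S : Type*} [CommRing S] [IsDomain S] [IsDiscreteValuationRing S]
    (u : S) (hu : Irreducible u)
    (Q : Type*) [Field Q] [Algebra S Q] [IsFractionRing S Q]
    (B : Type*) [CommRing B] [Algebra S B] [Module.Flat S B]
    (hred : IsReduced (B ⊗[S] IsLocalRing.ResidueField S))
    (x : B ⊗[S] Q) (hx : x * x = x) :
    x ∈ Set.range (Algebra.TensorProduct.includeLeft (R := S) (S := S) (A := B) (B := Q)) := by
  have halg : Function.Injective (algebraMap S Q) := IsFractionRing.injective S Q
  -- injectivity of b ↦ b ⊗ₜ 1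
  have hinj : ∀ b b' : B, b ⊗ₜ[S] (1 : Q) = b' ⊗ₜ[S] (1 : Q) → b = b' := by
    intro b b' h
    have hi : Function.Injective (LinearMap.lTensor B (Algebra.linearMap S Q)) :=
      Module.Flat.lTensor_preserves_injective_linearMap _ halg
    have h2 : (LinearMap.lTensor B (Algebra.linearMap S Q)) (b ⊗ₜ (1:S))
        = (LinearMap.lTensor B (Algebra.linearMap S Q)) (b' ⊗ₜ (1:S)) := by
      simpa using h
    have h3 := hi h2
    have h4 := congrArg (TensorProduct.rid S B) h3
    simpa using h4
  -- multiplication lemma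
  have L1 : ∀ (c : S) (b : B), ((1:B) ⊗ₜ[S] algebraMap S Q c) * (b ⊗ₜ[S] (1:Q))
      = (c • b) ⊗ₜ[S] (1 : Q) := by
    intro c b
    rw [Algebra.TensorProduct.tmul_mul_tmul, one_mul, mul_one,
      Algebra.algebraMap_eq_smul_one, TensorProduct.tmul_smul, TensorProduct.smul_tmul']
  -- denominators in Q are powers of u
  have hq : ∀ q : Q, ∃ (n : ℕ) (s : S), algebraMap S Q (u ^ n) * q = algebraMap S Q s := by
    intro q
    obtain ⟨⟨a, c⟩, rfl⟩ := IsLocalization.mk'_surjective (nonZeroDivisors S) q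
    have hc0 : (c : S) ≠ 0 := nonZeroDivisors.coe_ne_zero c
    obtain ⟨n, w, hw⟩ := IsDiscreteValuationRing.eq_unit_mul_pow_irreducible hc0 hu
    refine ⟨n, (↑w⁻¹ : S) * a, ?_⟩
    have hun : (u : S) ^ n = (↑w⁻¹ : S) * c := by
      rw [hw, ← mul_assoc]
      norm_cast
      simp
    rw [hun, map_mul, map_mul, mul_assoc, IsLocalization.mk'_spec']
  -- every element has a power of u clearing denominators
  have hex : ∀ y : B ⊗[S] Q, ∃ (n : ℕ) (b : B),
      ((1:B) ⊗ₜ[S] algebraMap S Q (u ^ n)) * y = b ⊗ₜ[S] (1 : Q) := by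
    intro y
    induction y with
    | zero => exact ⟨0, 0, by simp⟩
    | tmul b q =>
        obtain ⟨n, s, hs⟩ := hq q
        refine ⟨n, s • b, ?_⟩
        rw [Algebra.TensorProduct.tmul_mul_tmul, one_mul, hs,
          Algebra.algebraMap_eq_smul_one, TensorProduct.tmul_smul, TensorProduct.smul_tmul']
    | add y z hy hz =>
        obtain ⟨n₁, b₁, h₁⟩ := hy
        obtain ⟨n₂, b₂, h₂⟩ := hz
        refine ⟨n₁ + n₂, (u ^ n₂) • b₁ + (u ^ n₁) • b₂, ?_⟩
        have key : ((1:B) ⊗ₜ[S] algebraMap S Q (u ^ (n₁ + n₂)))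
            = ((1:B) ⊗ₜ[S] algebraMap S Q (u ^ n₂)) * ((1:B) ⊗ₜ[S] algebraMap S Q (u ^ n₁)) := by
          rw [Algebra.TensorProduct.tmul_mul_tmul, one_mul, ← map_mul, ← pow_add, add_comm n₂ n₁]
        rw [mul_add, TensorProduct.add_tmul]
        rw [key, mul_assoc, h₁, L1]
        congr 1
        rw [mul_comm (((1:B) ⊗ₜ[S] algebraMap S Q (u ^ n₂)))]
        rw [mul_assoc, h₂, L1]
  set κ := IsLocalRing.ResidueField S with hκ
  have hκu : algebraMap S κ u = 0 := by
    have : algebraMap S κ = Ideal.Quotient.mk (IsLocalRing.maximalIdeal S) :=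
      Ideal.Quotient.algebraMap_eq _
    rw [this]
    exact Ideal.Quotient.eq_zero_iff_mem.mpr
      (hu.maximalIdeal_eq ▸ Ideal.mem_span_singleton_self u)
  have hunit : IsUnit ((1:B) ⊗ₜ[S] algebraMap S Q u) := by
    refine IsUnit.of_mul_eq_one ((1:B) ⊗ₜ[S] (algebraMap S Q u)⁻¹) ?_
    rw [Algebra.TensorProduct.tmul_mul_tmul, one_mul,
      mul_inv_cancel₀ ((map_ne_zero_iff _ halg).mpr hu.ne_zero),
      ← Algebra.TensorProduct.one_def]
  -- main descent step
  have step : ∀ (n : ℕ) (b : B),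
      ((1:B) ⊗ₜ[S] algebraMap S Q (u ^ (n+1))) * x = b ⊗ₜ[S] (1 : Q) →
      ∃ b' : B, ((1:B) ⊗ₜ[S] algebraMap S Q (u ^ n)) * x = b' ⊗ₜ[S] (1 : Q) := by
    intro n b hb
    have hbb : (b * b) ⊗ₜ[S] (1:Q) = ((u ^ (n+1)) • b) ⊗ₜ[S] (1:Q) := by
      have h1 : (b * b) ⊗ₜ[S] (1:Q) = (b ⊗ₜ[S] (1:Q)) * (b ⊗ₜ[S] (1:Q)) := by
        rw [Algebra.TensorProduct.tmul_mul_tmul, mul_one]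
      rw [h1, ← hb]
      calc (((1:B) ⊗ₜ[S] algebraMap S Q (u ^ (n+1))) * x) *
              (((1:B) ⊗ₜ[S] algebraMap S Q (u ^ (n+1))) * x)
          = ((1:B) ⊗ₜ[S] algebraMap S Q (u ^ (n+1))) *
              (((1:B) ⊗ₜ[S] algebraMap S Q (u ^ (n+1))) * (x * x)) := by ring
        _ = ((1:B) ⊗ₜ[S] algebraMap S Q (u ^ (n+1))) *
              (((1:B) ⊗ₜ[S] algebraMap S Q (u ^ (n+1))) * x) := by rw [hx]
        _ = ((1:B) ⊗ₜ[S] algebraMap S Q (u ^ (n+1))) * (b ⊗ₜ[S] (1:Q)) := by rw [hb]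
        _ = ((u ^ (n+1)) • b) ⊗ₜ[S] (1:Q) := L1 _ _
    have hBB : b * b = (u ^ (n+1)) • b := hinj _ _ hbb
    -- pass to the residue field
    have hb0 : b ⊗ₜ[S] (1 : κ) = 0 := by
      have hnil : IsNilpotent (b ⊗ₜ[S] (1 : κ)) := by
        refine ⟨2, ?_⟩
        rw [pow_two, Algebra.TensorProduct.tmul_mul_tmul, mul_one, hBB,
          TensorProduct.smul_tmul]
        have h7 : (u ^ (n+1)) • (1:κ) = 0 := by
          rw [← Algebra.algebraMap_eq_smul_one, map_pow, hκu, zero_pow n.succ_ne_zero]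
        rw [h7, TensorProduct.tmul_zero]
      exact hnil.eq_zero
    have hzero : (Submodule.Quotient.mk b :
        B ⧸ ((IsLocalRing.maximalIdeal S) • (⊤ : Submodule S B))) = 0 := by
      set e := TensorProduct.tensorQuotEquivQuotSMul B (IsLocalRing.maximalIdeal S) with he
      have h6 := TensorProduct.tensorQuotEquivQuotSMul_tmul_mk (M := B)
        (IsLocalRing.maximalIdeal S) b (1:S)
      rw [one_smul] at h6
      calc (Submodule.Quotient.mk b :
            B ⧸ ((IsLocalRing.maximalIdeal S) • (⊤ : Submodule S B)))
          = e (b ⊗ₜ[S] (Ideal.Quotient.mk (IsLocalRing.maximalIdeal S) (1:S))) := h6.symm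
        _ = e 0 := congrArg e hb0
        _ = 0 := LinearEquiv.map_zero e
    have hmem : b ∈ (IsLocalRing.maximalIdeal S) • (⊤ : Submodule S B) :=
      (Submodule.Quotient.mk_eq_zero _).mp hzero
    rw [hu.maximalIdeal_eq] at hmem
    obtain ⟨b', hb'⟩ : ∃ b', b = u • b' := by
      refine Submodule.smul_induction_on hmem ?_ ?_
      · intro r hr m _
        obtain ⟨c, rfl⟩ := Ideal.mem_span_singleton'.mp hr
        exact ⟨c • m, by rw [mul_comm, mul_smul]⟩
      · rintro y z ⟨y', rfl⟩ ⟨z', rfl⟩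
        exact ⟨y' + z', (smul_add u y' z').symm⟩
    refine ⟨b', ?_⟩
    apply hunit.mul_left_cancel
    calc ((1:B) ⊗ₜ[S] algebraMap S Q u) * (((1:B) ⊗ₜ[S] algebraMap S Q (u ^ n)) * x)
        = ((1:B) ⊗ₜ[S] algebraMap S Q (u ^ (n+1))) * x := by
          rw [← mul_assoc, Algebra.TensorProduct.tmul_mul_tmul, one_mul, ← map_mul, ← pow_succ']
      _ = b ⊗ₜ[S] (1:Q) := hb
      _ = (u • b') ⊗ₜ[S] (1:Q) := by rw [hb']
      _ = ((1:B) ⊗ₜ[S] algebraMap S Q u) * (b' ⊗ₜ[S] (1:Q)) := (L1 _ _).symm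
  -- conclude
  obtain ⟨n, b, hb⟩ := hex x
  induction n generalizing b with
  | zero =>
      refine ⟨b, ?_⟩
      have h1 : ((1:B) ⊗ₜ[S] algebraMap S Q (u ^ 0)) = 1 := by
        rw [pow_zero, map_one, ← Algebra.TensorProduct.one_def]
      rw [h1, one_mul] at hb
      exact hb.symm
  | succ n ih =>
      obtain ⟨b', hb'⟩ := step n b hb
      exact ih b' hb'
end

section
/- Let R be an integral domain of finite type over an algebraically closed field k with units χ₁,…,χ_r whose k-span has dimension at least 2. Let f = Σ χ_l t_l in R[t₁,…,t_r], X = Spec R, and V(f) the closed subscheme of X ×_k 𝔸^r_k defined by f. Then the second projection restricted to V(f), namely pr₂ : V(f) → 𝔸^r_k, is dominant. -/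
open MvPolynomial

/-- For a finitely generated domain over an algebraically closed field, any nonzero element
is detected by some `k`-algebra homomorphism to `k`. -/
private lemma exists_algHom_ne_zero {k : Type*} [Field k] [IsAlgClosed k]
    {R : Type*} [CommRing R] [IsDomain R] [Algebra k R] (hft : Algebra.FiniteType k R)
    {x : R} (hx : x ≠ 0) : ∃ φ : R →ₐ[k] k, φ x ≠ 0 := by
  have hJ : IsJacobsonRing R := by
    obtain ⟨n, _, f, hf⟩ := Algebra.FiniteType.iff_quotient_mvPolynomial'.mp hft
    exact isJacobsonRing_of_surjective ⟨f.toRingHom, hf⟩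
  have hbot : ((⊥ : Ideal R).jacobson : Ideal R) = ⊥ :=
    hJ.out' ⊥ Ideal.bot_prime.isRadical
  have hmem : x ∉ (⊥ : Ideal R).jacobson := by
    rw [hbot]; simpa using hx
  rw [Ideal.jacobson] at hmem
  obtain ⟨m, hmS, hxm⟩ : ∃ m : Ideal R, (⊥ ≤ m ∧ m.IsMaximal) ∧ x ∉ m := by
    by_contra hc
    push_neg at hc
    exact hmem (Ideal.mem_sInf.mpr fun {I} hI => hc I hI)
  haveI hm : m.IsMaximal := hmS.2
  haveI : m.IsPrime := hm.isPrime
  have hFT : Algebra.FiniteType k (R ⧸ m) :=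
    (fun _ : Algebra.FiniteType k R => Algebra.FiniteType.of_surjective (Ideal.Quotient.mkₐ k m)) hft
      (Ideal.Quotient.mkₐ_surjective k m)
  haveI : Module.Finite k (R ⧸ m) :=
    @finite_of_finite_type_of_isJacobsonRing k (R ⧸ m) _ (Ideal.Quotient.field m)
      (Ideal.Quotient.algebra k) _ hFT
  haveI : Algebra.IsIntegral k (R ⧸ m) := Algebra.IsIntegral.of_finite k (R ⧸ m)
  have hsurj : Function.Surjective (algebraMap k (R ⧸ m)) :=
    IsAlgClosed.algebraMap_bijective_of_isIntegral.2
  let e := AlgEquiv.ofBijective (Algebra.ofId k (R ⧸ m))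
    ⟨(algebraMap k (R ⧸ m)).injective, hsurj⟩
  refine ⟨e.symm.toAlgHom.comp (Ideal.Quotient.mkₐ k m), fun h0 => hxm ?_⟩
  have : (Ideal.Quotient.mkₐ k m) x = 0 := by
    apply e.symm.injective
    simpa using h0
  rwa [← Ideal.Quotient.eq_zero_iff_mem]

set_option maxHeartbeats 1000000 in
set_option synthInstance.maxHeartbeats 400000 in
/-- Let `R` be an integral domain of finite type over an algebraically
closed field `k`, `χ₁, …, χ_r` units of `R` whose `k`-span has dimension at least `2`,
and `f = ∑ χₗ tₗ ∈ R[t₁, …, t_r]`.  Then the second projection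
`V(f) ⊆ Spec R ×ₖ 𝔸ʳ → 𝔸ʳ` is dominant; since `𝔸ʳ` is integral, this says exactly that
the corresponding ring map `k[t₁, …, t_r] → R[t₁, …, t_r]/(f)` is injective. -/
theorem stmt3 {k : Type*} [Field k] [IsAlgClosed k]
    {R : Type*} [CommRing R] [IsDomain R] [Algebra k R] (hft : Algebra.FiniteType k R)
    (r : ℕ) (χ : Fin r → Rˣ)
    (hdim : 2 ≤ Module.finrank k (Submodule.span k (Set.range fun l => (χ l : R)))) :
    Function.Injective
      ((Ideal.Quotient.mk (Ideal.span
          {∑ l, MvPolynomial.C (χ l : R) * MvPolynomial.X l})).comp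
        (MvPolynomial.map (algebraMap k R))) := by
  rw [injective_iff_map_eq_zero]
  intro g hg
  by_contra hg0
  rw [RingHom.comp_apply, Ideal.Quotient.eq_zero_iff_mem, Ideal.mem_span_singleton] at hg
  obtain ⟨h, hh⟩ := hg
  -- choose a pair of indices with `χ i` not a multiple of `χ j`
  obtain ⟨i, j, hij⟩ : ∃ i j : Fin r, ∀ c : k, (χ i : R) ≠ c • (χ j : R) := by
    by_contra hcon
    push_neg at hcon
    rcases Nat.eq_zero_or_pos r with hr | hr
    · subst hr
      rw [show (Set.range fun l : Fin 0 => ((χ l : R))) = ∅ from Set.range_eq_empty _,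
        Submodule.span_empty] at hdim
      rw [finrank_bot] at hdim
      omega
    · set j0 : Fin r := ⟨0, hr⟩
      have hle : Submodule.span k (Set.range fun l => (χ l : R)) ≤
          Submodule.span k {(χ j0 : R)} := by
        rw [Submodule.span_le]
        rintro _ ⟨l, rfl⟩
        obtain ⟨c, hc⟩ := hcon l j0
        show (χ l : R) ∈ Submodule.span k {(χ j0 : R)}
        rw [hc]
        exact Submodule.smul_mem _ _ (Submodule.subset_span (Set.mem_singleton _))
      have h1 : Module.finrank k (Submodule.span k (Set.range fun l => (χ l : R))) ≤
          Module.finrank k (Submodule.span k {(χ j0 : R)}) :=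
        Submodule.finrank_mono hle
      rw [finrank_span_singleton (χ j0).ne_zero] at h1
      omega
  have hij' : i ≠ j := fun hij2 => hij 1 (by rw [hij2, one_smul])
  classical
  -- nonvanishing of `φ (χ l)`
  have hu : ∀ (φ : R →ₐ[k] k) (l : Fin r), φ (χ l : R) ≠ 0 :=
    fun φ l => ((χ l).isUnit.map φ).ne_zero
  -- the candidate roots
  set ρ : (R →ₐ[k] k) → MvPolynomial (Fin r) k := fun φ =>
    ∑ l ∈ Finset.univ.erase j, C (-(φ (χ j : R))⁻¹ * φ (χ l : R)) * X l with hρ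
  -- the one-variable avatar of `g`
  set Ψ : MvPolynomial (Fin r) k →ₐ[k] Polynomial (MvPolynomial (Fin r) k) :=
    aeval (fun l => if l = j then Polynomial.X else Polynomial.C (X l)) with hΨ
  -- evaluation of `Ψ g` at a point equals substitution
  have heval : ∀ (p : MvPolynomial (Fin r) k) (ρ0 : MvPolynomial (Fin r) k),
      Polynomial.eval ρ0 (Ψ p) =
        aeval (fun l => if l = j then ρ0 else X l) p := by
    intro p ρ0
    have hext : (Polynomial.evalRingHom ρ0).comp (Ψ.toRingHom) =
        (aeval (R := k) (fun l => if l = j then ρ0 else X l)).toRingHom := by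
      apply MvPolynomial.ringHom_ext
      · intro a
        simp [hΨ, algebraMap_eq]
      · intro n
        by_cases hn : n = j <;> simp [hΨ, hn]
    exact DFunLike.congr_fun hext p
  -- each `ρ φ` is a root of `Ψ g`
  have hroot : ∀ φ : R →ₐ[k] k, (Ψ g).IsRoot (ρ φ) := by
    intro φ
    have hgφ : g = (MvPolynomial.map (φ : R →+* k))
        (MvPolynomial.map (algebraMap k R) g) := by
      rw [MvPolynomial.map_map]
      have : (φ : R →+* k).comp (algebraMap k R) = RingHom.id k := by
        ext a; simp
      rw [this, MvPolynomial.map_id]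
    rw [Polynomial.IsRoot, heval]
    set pt : Fin r → MvPolynomial (Fin r) k := fun l => if l = j then ρ φ else X l with hpt
    have hL : aeval pt ((MvPolynomial.map (φ : R →+* k))
        (∑ l, MvPolynomial.C (χ l : R) * MvPolynomial.X l)) = 0 := by
      rw [map_sum, map_sum]
      have hterm : ∀ l : Fin r, (aeval pt) ((MvPolynomial.map (φ : R →+* k))
          (MvPolynomial.C (χ l : R) * MvPolynomial.X l)) = C (φ (χ l : R)) * pt l := by
        intro l
        simp [algebraMap_eq]
      rw [Finset.sum_congr rfl (fun l _ => hterm l)]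
      rw [← Finset.add_sum_erase _ _ (Finset.mem_univ j)]
      have hj : pt j = ρ φ := by simp [hpt]
      have hrest : ∑ l ∈ Finset.univ.erase j, C (φ (χ l : R)) * pt l =
          ∑ l ∈ Finset.univ.erase j, C (φ (χ l : R)) * X l := by
        apply Finset.sum_congr rfl
        intro l hl
        rw [hpt]
        simp [Finset.ne_of_mem_erase hl]
      rw [hj, hrest, hρ, Finset.mul_sum]
      rw [← Finset.sum_add_distrib]
      apply Finset.sum_eq_zero
      intro l _
      rw [← mul_assoc, ← map_mul]
      have : φ (χ j : R) * (-(φ (χ j : R))⁻¹ * φ (χ l : R)) = -(φ (χ l : R)) := by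
        rw [neg_mul, mul_neg, ← mul_assoc, mul_inv_cancel₀ (hu φ j), one_mul]
      rw [this, map_neg]
      ring
    rw [hgφ, hh, map_mul, map_mul, hL, zero_mul]
  -- `Ψ g ≠ 0`
  have hΨg : Ψ g ≠ 0 := by
    intro h0
    apply hg0
    have hinv : ((Polynomial.aeval (X j : MvPolynomial (Fin r) k)).restrictScalars k).comp Ψ =
        AlgHom.id k (MvPolynomial (Fin r) k) := by
      apply MvPolynomial.algHom_ext
      intro l
      by_cases hl : l = j <;> simp [hΨ, hl]
    have := DFunLike.congr_fun hinv g
    simp only [AlgHom.coe_comp, Function.comp_apply, AlgHom.coe_id, id_eq] at this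
    rw [← this, h0, map_zero]
  -- the set of ratios is infinite
  have hratio : (Set.range fun φ : R →ₐ[k] k => (φ (χ j : R))⁻¹ * φ (χ i : R)).Infinite := by
    intro hfin
    set F := hfin.toFinset with hF
    set x : R := ∏ c ∈ F, ((χ i : R) - algebraMap k R c * (χ j : R)) with hx
    have hxne : x ≠ 0 := by
      rw [hx]
      apply Finset.prod_ne_zero_iff.mpr
      intro c _
      rw [sub_ne_zero]
      have := hij c
      rwa [Algebra.smul_def] at this
    obtain ⟨φ, hφ⟩ := exists_algHom_ne_zero hft hxne
    apply hφ
    rw [hx, map_prod]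
    apply Finset.prod_eq_zero (i := (φ (χ j : R))⁻¹ * φ (χ i : R))
    · rw [hF, Set.Finite.mem_toFinset]
      exact ⟨φ, rfl⟩
    · rw [map_sub, map_mul, AlgHom.commutes]
      rw [show algebraMap k k ((φ (χ j : R))⁻¹ * φ (χ i : R)) = (φ (χ j : R))⁻¹ * φ (χ i : R)
        from rfl]
      rw [mul_right_comm, inv_mul_cancel₀ (hu φ j), one_mul, sub_self]
  -- hence infinitely many roots
  have hcomp : (Set.range fun φ : R →ₐ[k] k => (φ (χ j : R))⁻¹ * φ (χ i : R)) =
        (fun ρ0 : MvPolynomial (Fin r) k => -(coeff (Finsupp.single i 1) ρ0)) '' Set.range ρ := by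
    rw [← Set.range_comp]
    apply congrArg
    funext φ
    simp only [Function.comp_apply, hρ]
    rw [coeff_sum]
    rw [Finset.sum_eq_single i]
    · rw [C_mul_X_eq_monomial, coeff_monomial, if_pos rfl]
      ring
    · intro l hl hli
      rw [C_mul_X_eq_monomial, coeff_monomial, if_neg]
      exact fun hc => hli (Finsupp.single_left_inj one_ne_zero |>.mp hc)
    · intro hi
      exact absurd (Finset.mem_erase.mpr ⟨hij', Finset.mem_univ i⟩) hi
  have hinj : (Set.range ρ).Infinite := by
    intro hfin2
    exact hratio (by rw [hcomp]; exact hfin2.image _)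
  exact hinj ((Polynomial.finite_setOf_isRoot hΨg).subset
    (Set.range_subset_iff.mpr fun φ => hroot φ))
end

section
/- Let V be a finite-dimensional real vector space with dual W, let S be a nonempty finite set, u : S → W a map, P(u) the convex hull of u(S) in W, D(u) the cone in W × ℝ generated by {(u(i), 1) : i ∈ S}, C(u) ⊆ V × ℝ the dual cone of D(u), and π : V × ℝ → V the first projection. Then: (a) for every face σ of C(u) with (0,1) ∉ σ, the projection π(σ) is a cone of the (inner) normal fan Σ(u) of P(u); and (b) for every cone σ' ∈ Σ(u) there exists a unique face σ of C(u) with (0,1) ∉ σ and π(σ) = σ'. -/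
open scoped BigOperators

variable {V : Type*} [AddCommGroup V] [Module ℝ V] [FiniteDimensional ℝ V]
  {S : Type} [Fintype S] [Nonempty S]

/-- The polytope `P(u)`: the convex hull of the points `u i` in the dual space `W`. -/
def polytopeOf (u : S → Module.Dual ℝ V) : Set (Module.Dual ℝ V) :=
  convexHull ℝ (Set.range u)

/-- The cone `D(u) ⊆ W × ℝ` generated by the points `(u i, 1)`. -/
def Dcone (u : S → Module.Dual ℝ V) : Set (Module.Dual ℝ V × ℝ) :=
  {y | ∃ c : S → ℝ, (∀ i, 0 ≤ c i) ∧ y = ∑ i, c i • (u i, (1 : ℝ))}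

/-- The pairing between `V × ℝ` and its "dual" `W × ℝ`. -/
def pairVW (x : V × ℝ) (y : Module.Dual ℝ V × ℝ) : ℝ :=
  y.1 x.1 + x.2 * y.2

/-- The dual cone `C(u) ⊆ V × ℝ` of `D(u)`. -/
def Ccone (u : S → Module.Dual ℝ V) : Set (V × ℝ) :=
  {x | ∀ y ∈ Dcone u, 0 ≤ pairVW x y}

/-- Faces of the convex cone `C(u)`: intersections with supporting hyperplanes,
together with `C(u)` itself. -/
def IsFaceOfC (u : S → Module.Dual ℝ V) (σ : Set (V × ℝ)) : Prop :=
  σ = Ccone u ∨ ∃ φ : (V × ℝ) →ₗ[ℝ] ℝ,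
    (∀ x ∈ Ccone u, 0 ≤ φ x) ∧ σ = Ccone u ∩ {x | φ x = 0}

/-- (Nonempty) faces of the polytope `P(u)`: sets of minimizers of a linear functional
`x ∈ V`; for `x = 0` this gives `P(u)` itself. -/
def IsPolytopeFace (u : S → Module.Dual ℝ V) (Q : Set (Module.Dual ℝ V)) : Prop :=
  ∃ x : V, Q = {ω ∈ polytopeOf u | ∀ ω' ∈ polytopeOf u, ω x ≤ ω' x}

/-- The (inner) normal fan `Σ(u)` of the polytope `P(u)`. -/
def normalFan (u : S → Module.Dual ℝ V) : Set (Set V) :=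
  {σ | ∃ Q, IsPolytopeFace u Q ∧
    σ = {v | ∀ ω₁ ∈ polytopeOf u, ∀ ω₂ ∈ Q, 0 ≤ (ω₁ - ω₂) v}}

/-! ### Auxiliary lemmas -/

section Aux

variable (u : S → Module.Dual ℝ V)

lemma mem_Dcone_single (i : S) : ((u i, (1 : ℝ)) : Module.Dual ℝ V × ℝ) ∈ Dcone u := by
  classical
  refine ⟨fun j => if j = i then 1 else 0, fun j => by dsimp only; split <;> norm_num, ?_⟩
  rw [Finset.sum_eq_single_of_mem i (Finset.mem_univ i) (fun j _ hj => by simp [hj])]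
  simp

/-- The pairing against a fixed `x`, as a linear map in the second variable. -/
noncomputable def pairL (x : V × ℝ) : (Module.Dual ℝ V × ℝ) →ₗ[ℝ] ℝ where
  toFun y := y.1 x.1 + x.2 * y.2
  map_add' y z := by simp; ring
  map_smul' c y := by simp; ring

lemma mem_Ccone_iff (x : V × ℝ) : x ∈ Ccone u ↔ ∀ i, 0 ≤ u i x.1 + x.2 := by
  constructor
  · intro hx i
    have := hx _ (mem_Dcone_single u i)
    simpa [pairVW] using this
  · rintro h y ⟨c, hc, rfl⟩
    have hL : ∀ y : Module.Dual ℝ V × ℝ, pairVW x y = pairL x y := fun _ => rfl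
    rw [hL, map_sum]
    refine Finset.sum_nonneg fun i _ => ?_
    rw [map_smul]
    have : pairL x (u i, (1 : ℝ)) = u i x.1 + x.2 := by simp [pairL]
    rw [smul_eq_mul, this]
    exact mul_nonneg (hc i) (h i)

lemma sum_smul_apply (l : S → ℝ) (v : V) : (∑ i, l i • u i) v = ∑ i, l i * u i v := by
  rw [LinearMap.sum_apply]
  simp

lemma u_mem_polytope (i : S) : u i ∈ polytopeOf u :=
  subset_convexHull ℝ _ (Set.mem_range_self i)

lemma mem_polytope_iff (ω : Module.Dual ℝ V) :
    ω ∈ polytopeOf u ↔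
      ∃ l : S → ℝ, (∀ i, 0 ≤ l i) ∧ ∑ i, l i = 1 ∧ ω = ∑ i, l i • u i := by
  classical
  constructor
  · intro h
    have hsub : polytopeOf u ⊆
        {ω | ∃ l : S → ℝ, (∀ i, 0 ≤ l i) ∧ ∑ i, l i = 1 ∧ ω = ∑ i, l i • u i} := by
      refine convexHull_min ?_ ?_
      · rintro _ ⟨i, rfl⟩
        refine ⟨fun j => if j = i then 1 else 0, fun j => by dsimp only; split <;> norm_num,
          by simp, ?_⟩
        rw [Finset.sum_eq_single_of_mem i (Finset.mem_univ i) (fun j _ hj => by simp [hj])]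
        simp
      · rintro ω₁ ⟨l, hl0, hl1, rfl⟩ ω₂ ⟨m, hm0, hm1, rfl⟩ a b ha hb hab
        refine ⟨fun i => a * l i + b * m i,
          fun i => add_nonneg (mul_nonneg ha (hl0 i)) (mul_nonneg hb (hm0 i)), ?_, ?_⟩
        · rw [Finset.sum_add_distrib, ← Finset.mul_sum, ← Finset.mul_sum, hl1, hm1]
          simpa using hab
        · rw [Finset.smul_sum, Finset.smul_sum, ← Finset.sum_add_distrib]
          refine Finset.sum_congr rfl fun i _ => ?_
          rw [add_smul, smul_smul, smul_smul]
    exact hsub h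
  · rintro ⟨l, hl0, hl1, rfl⟩
    have := Finset.centerMass_mem_convexHull (Finset.univ) (fun i _ => hl0 i)
      (by rw [hl1]; norm_num) (fun i _ => Set.mem_range_self (f := u) i)
    rwa [Finset.centerMass, hl1, inv_one, one_smul] at this

lemma le_polytope_eval {ω : Module.Dual ℝ V} (hω : ω ∈ polytopeOf u) (x : V) {a : ℝ}
    (ha : ∀ j, a ≤ u j x) : a ≤ ω x := by
  obtain ⟨l, hl0, hl1, rfl⟩ := (mem_polytope_iff u _).1 hω
  rw [sum_smul_apply]
  have h1 : ∑ i, l i * a = a := by rw [← Finset.sum_mul, hl1, one_mul]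
  rw [← h1]
  exact Finset.sum_le_sum fun i _ => mul_le_mul_of_nonneg_left (ha i) (hl0 i)

/-- The candidate normal-fan cone attached to `x₀ : V`. -/
def Kset (u : S → Module.Dual ℝ V) (x₀ : V) : Set V :=
  {v | ∀ i, (∀ j, u i x₀ ≤ u j x₀) → ∀ k, u i v ≤ u k v}

lemma cone_eq_Kset (x₀ : V) :
    {v | ∀ ω₁ ∈ polytopeOf u,
        ∀ ω₂ ∈ {ω ∈ polytopeOf u | ∀ ω' ∈ polytopeOf u, ω x₀ ≤ ω' x₀},
      0 ≤ (ω₁ - ω₂) v} = Kset u x₀ := by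
  classical
  ext v
  constructor
  · intro hv i hi k
    have hui : u i ∈ {ω ∈ polytopeOf u | ∀ ω' ∈ polytopeOf u, ω x₀ ≤ ω' x₀} :=
      ⟨u_mem_polytope u i, fun ω' hω' => le_polytope_eval u hω' x₀ hi⟩
    have := hv (u k) (u_mem_polytope u k) (u i) hui
    simpa [sub_nonneg] using this
  · rintro hv ω₁ hω₁ ω₂ ⟨hω₂P, hω₂min⟩
    obtain ⟨i₀, -, hi₀⟩ :=
      Finset.exists_min_image Finset.univ (fun i => u i x₀) Finset.univ_nonempty
    obtain ⟨l, hl0, hl1, hω₂⟩ := (mem_polytope_iff u ω₂).1 hω₂P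
    have hterm : ∀ j, 0 ≤ l j * (u j x₀ - u i₀ x₀) := fun j =>
      mul_nonneg (hl0 j) (sub_nonneg.2 (hi₀ j (Finset.mem_univ j)))
    have hexp : ω₂ x₀ = ∑ j, l j * u j x₀ := by rw [hω₂, sum_smul_apply]
    have hsumle : ∑ j, l j * (u j x₀ - u i₀ x₀) ≤ 0 := by
      have h1 : ∑ j, l j * (u j x₀ - u i₀ x₀)
          = (∑ j, l j * u j x₀) - (∑ j, l j) * u i₀ x₀ := by
        rw [Finset.sum_mul, ← Finset.sum_sub_distrib]
        exact Finset.sum_congr rfl fun j _ => by ring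
      rw [h1, hl1, one_mul, ← hexp]
      have := hω₂min (u i₀) (u_mem_polytope u i₀)
      linarith
    have hz := (Finset.sum_eq_zero_iff_of_nonneg (fun j _ => hterm j)).1
      (le_antisymm hsumle (Finset.sum_nonneg fun j _ => hterm j))
    have hsupp : ∀ j, 0 < l j → ∀ k, u j x₀ ≤ u k x₀ := by
      intro j hj k
      have hzj := hz j (Finset.mem_univ j)
      have hjeq : u j x₀ = u i₀ x₀ := by
        rcases mul_eq_zero.1 hzj with h | h
        · exact absurd h hj.ne'
        · have := sub_eq_zero.1 h; linarith
      rw [hjeq]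
      exact hi₀ k (Finset.mem_univ k)
    have hω₂le : ∀ k, ω₂ v ≤ u k v := by
      intro k
      rw [hω₂, sum_smul_apply]
      have h2 : ∑ j, l j * u k v = u k v := by rw [← Finset.sum_mul, hl1, one_mul]
      rw [← h2]
      refine Finset.sum_le_sum fun j _ => ?_
      rcases eq_or_lt_of_le (hl0 j) with h | h
      · rw [← h]; simp
      · exact mul_le_mul_of_nonneg_left (hv j (hsupp j h) k) h.le
    have := le_polytope_eval u hω₁ v hω₂le
    simpa [sub_nonneg] using this

lemma zero_one_mem_Ccone : ((0 : V), (1 : ℝ)) ∈ Ccone u := by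
  rw [mem_Ccone_iff]
  intro i
  simp

/-- Normal form for a face of `C(u)` not containing `(0,1)`. -/
lemma face_normal_form {σ : Set (V × ℝ)} (hσ : IsFaceOfC u σ)
    (h01 : ((0 : V), (1 : ℝ)) ∉ σ) :
    ∃ ω₀ : Module.Dual ℝ V, (∀ v, ∃ i, u i v ≤ ω₀ v) ∧
      σ = {x | x ∈ Ccone u ∧ ω₀ x.1 + x.2 = 0} := by
  classical
  have h01C := zero_one_mem_Ccone u
  rcases hσ with rfl | ⟨φ, hφ0, rfl⟩
  · exact absurd h01C h01
  have hcne : φ ((0 : V), (1 : ℝ)) ≠ 0 := fun h => h01 ⟨h01C, h⟩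
  have hc : 0 < φ ((0 : V), (1 : ℝ)) := lt_of_le_of_ne (hφ0 _ h01C) (Ne.symm hcne)
  set c := φ ((0 : V), (1 : ℝ)) with hcdef
  have hdecomp : ∀ x : V × ℝ, φ x = φ (x.1, 0) + x.2 * c := by
    intro x
    have hx : x = ((x.1, 0) : V × ℝ) + x.2 • ((0 : V), (1 : ℝ)) := by
      simp [Prod.ext_iff]
    calc φ x = φ (((x.1, 0) : V × ℝ) + x.2 • ((0 : V), (1 : ℝ))) := by rw [← hx]
      _ = φ (x.1, 0) + x.2 * c := by rw [map_add, map_smul, smul_eq_mul]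
  refine ⟨c⁻¹ • (φ.comp (LinearMap.inl ℝ V ℝ)), ?_, ?_⟩
  · intro v
    obtain ⟨i₀, -, hi₀⟩ :=
      Finset.exists_min_image Finset.univ (fun i => u i v) Finset.univ_nonempty
    refine ⟨i₀, ?_⟩
    have hmem : ((v, -(u i₀ v)) : V × ℝ) ∈ Ccone u := by
      rw [mem_Ccone_iff]
      intro j
      have := hi₀ j (Finset.mem_univ j)
      dsimp only
      linarith
    have h1 := hφ0 _ hmem
    rw [hdecomp] at h1
    dsimp only at h1
    have h2 : c * u i₀ v ≤ φ (v, 0) := by nlinarith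
    simp only [LinearMap.smul_apply, LinearMap.coe_comp, Function.comp_apply,
      LinearMap.inl_apply, smul_eq_mul]
    calc u i₀ v = c⁻¹ * (c * u i₀ v) := by field_simp
      _ ≤ c⁻¹ * φ (v, 0) := mul_le_mul_of_nonneg_left h2 (inv_nonneg.2 hc.le)
  · ext x
    simp only [Set.mem_inter_iff, Set.mem_setOf_eq, LinearMap.smul_apply, LinearMap.coe_comp,
      Function.comp_apply, LinearMap.inl_apply, smul_eq_mul]
    have hiff : φ x = 0 ↔ c⁻¹ * φ (x.1, 0) + x.2 = 0 := by
      rw [hdecomp x]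
      constructor <;> intro h
      · have hφx : φ (x.1, 0) = -(x.2 * c) := by linarith
        rw [hφx]
        field_simp
        ring
      · have h1 : c⁻¹ * φ (x.1, 0) = -x.2 := by linarith
        have h2 : φ (x.1, 0) = c * -x.2 := by
          rw [← h1, ← mul_assoc, mul_inv_cancel₀ hc.ne', one_mul]
        rw [h2]
        ring
    rw [hiff]

/-- Separation: a linear functional dominating the min of the `u i` pointwise
belongs to the polytope. -/
lemma polytope_mem_of_min_le (ω₀ : Module.Dual ℝ V)
    (h : ∀ v : V, ∃ i, u i v ≤ ω₀ v) : ω₀ ∈ polytopeOf u := by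
  classical
  by_contra hω
  set n := Module.finrank ℝ (Module.Dual ℝ V) with hn
  let e : Module.Dual ℝ V ≃ₗ[ℝ] (Fin n → ℝ) := (Module.finBasis ℝ (Module.Dual ℝ V)).equivFun
  have himg : e ω₀ ∉ convexHull ℝ (⇑e '' Set.range u) := by
    intro hmem
    rw [show (⇑e '' Set.range u) = ⇑e.toLinearMap '' Set.range u from rfl,
      ← e.toLinearMap.image_convexHull] at hmem
    obtain ⟨w, hw, hww⟩ := hmem
    exact hω (by rwa [e.injective hww] at hw)
  have hcl : IsClosed (convexHull ℝ (⇑e '' Set.range u)) :=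
    (((Set.finite_range u).image ⇑e).isCompact_convexHull (𝕜 := ℝ)).isClosed
  obtain ⟨f, s, hfs, hball⟩ :=
    geometric_hahn_banach_point_closed (convex_convexHull ℝ _) hcl himg
  set g : Module.Dual ℝ (Module.Dual ℝ V) := f.toLinearMap.comp e.toLinearMap with hg
  set v : V := (Module.evalEquiv ℝ V).symm g with hv
  obtain ⟨i, hi⟩ := h v
  have h1 : u i v = f (e (u i)) := by
    rw [hv, Module.apply_evalEquiv_symm_apply]
    rfl
  have h2 : ω₀ v = f (e ω₀) := by
    rw [hv, Module.apply_evalEquiv_symm_apply]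
    rfl
  have h3 : s < f (e (u i)) :=
    hball _ (subset_convexHull ℝ _ (Set.mem_image_of_mem _ (Set.mem_range_self i)))
  rw [h1, h2] at hi
  linarith

/-- Faces of `C(u)` not containing `(0,1)` are determined by their projection. -/
lemma face_proj_subset {σ₁ σ₂ : Set (V × ℝ)} (h₁ : IsFaceOfC u σ₁)
    (h₁' : ((0 : V), (1 : ℝ)) ∉ σ₁) (h₂ : IsFaceOfC u σ₂)
    (h₂' : ((0 : V), (1 : ℝ)) ∉ σ₂) (hp : Prod.fst '' σ₁ ⊆ Prod.fst '' σ₂) :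
    σ₁ ⊆ σ₂ := by
  obtain ⟨ω₁, hω₁min, rfl⟩ := face_normal_form u h₁ h₁'
  obtain ⟨ω₂, hω₂min, rfl⟩ := face_normal_form u h₂ h₂'
  rintro ⟨x, t⟩ ⟨hxC, hx0⟩
  obtain ⟨⟨x', t₂⟩, ⟨hx₂C, hx₂0⟩, hfst⟩ := hp ⟨(x, t), ⟨hxC, hx0⟩, rfl⟩
  dsimp only at hfst hx0 hx₂0
  subst hfst
  have key : ω₁ x' = ω₂ x' := by
    obtain ⟨i₁, hi₁⟩ := hω₁min x'
    obtain ⟨i₂, hi₂⟩ := hω₂min x'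
    have hA : ω₁ x' ≤ u i₂ x' := by
      have := (mem_Ccone_iff u _).1 hxC i₂
      dsimp only at this
      linarith
    have hB : ω₂ x' ≤ u i₁ x' := by
      have := (mem_Ccone_iff u _).1 hx₂C i₁
      dsimp only at this
      linarith
    linarith
  exact ⟨hxC, by dsimp only; linarith⟩

/-- Part (a): the projection of a face not containing `(0,1)` is a normal fan cone. -/
lemma proj_mem_normalFan {σ : Set (V × ℝ)} (hσ : IsFaceOfC u σ)
    (h01 : ((0 : V), (1 : ℝ)) ∉ σ) : Prod.fst '' σ ∈ normalFan u := by
  classical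
  obtain ⟨ω₀, hmin, rfl⟩ := face_normal_form u hσ h01
  obtain ⟨l, hl0, hl1, hω₀⟩ := (mem_polytope_iff u ω₀).1 (polytope_mem_of_min_le u ω₀ hmin)
  obtain ⟨i₀, hi₀pos⟩ : ∃ i₀, 0 < l i₀ := by
    by_contra hcon
    push_neg at hcon
    have : ∑ i, l i = 0 := Finset.sum_eq_zero fun i _ => le_antisymm (hcon i) (hl0 i)
    rw [hl1] at this
    norm_num at this
  set T : Set V := {v | ∀ i, 0 < l i → ∀ k, u i v ≤ u k v} with hT
  have hproj : Prod.fst '' {x | x ∈ Ccone u ∧ ω₀ x.1 + x.2 = 0} = T := by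
    ext v
    constructor
    · rintro ⟨⟨x, t⟩, ⟨hxC, hx0⟩, rfl⟩
      intro i hi k
      dsimp only at hx0 ⊢
      have hge : ∀ j, 0 ≤ u j x + t := fun j => (mem_Ccone_iff u _).1 hxC j
      have hsum : ∑ j, l j * (u j x + t) = 0 := by
        have h1 : ∑ j, l j * (u j x + t) = ω₀ x + t := by
          rw [hω₀, sum_smul_apply]
          have : ∑ j, l j * (u j x + t) = ∑ j, l j * u j x + (∑ j, l j) * t := by
            rw [Finset.sum_mul, ← Finset.sum_add_distrib]
            exact Finset.sum_congr rfl fun j _ => by ring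
          rw [this, hl1, one_mul]
        rw [h1, hx0]
      have hz := (Finset.sum_eq_zero_iff_of_nonneg
        fun j _ => mul_nonneg (hl0 j) (hge j)).1 hsum
      have hi' : u i x + t = 0 := by
        rcases mul_eq_zero.1 (hz i (Finset.mem_univ i)) with h | h
        · exact absurd h hi.ne'
        · exact h
      have := hge k
      linarith
    · intro hv
      refine ⟨(v, -(u i₀ v)), ⟨?_, ?_⟩, rfl⟩
      · rw [mem_Ccone_iff]
        intro j
        have := hv i₀ hi₀pos j
        dsimp only
        linarith
      · dsimp only
        have hωv : ω₀ v = u i₀ v := by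
          rw [hω₀, sum_smul_apply]
          have heq : ∀ j, l j * u j v = l j * u i₀ v := by
            intro j
            rcases eq_or_lt_of_le (hl0 j) with h | h
            · rw [← h]; ring
            · rw [le_antisymm (hv j h i₀) (hv i₀ hi₀pos j)]
          rw [Finset.sum_congr rfl fun j _ => heq j, ← Finset.sum_mul, hl1, one_mul]
        rw [hωv]
        ring
  rw [hproj]
  set J : Set S := {j | ∀ v ∈ T, ∀ k, u j v ≤ u k v} with hJ
  have hTzero : (0 : V) ∈ T := by
    intro i _ k
    simp
  have hTadd : ∀ v w, v ∈ T → w ∈ T → v + w ∈ T := by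
    intro v w hv hw i hi k
    have h1 := hv i hi k
    have h2 := hw i hi k
    simp only [map_add]
    linarith
  have hwit : ∀ j, ∃ v, v ∈ T ∧ (j ∉ J → ∃ k, u k v < u j v) := by
    intro j
    by_cases hj : j ∈ J
    · exact ⟨0, hTzero, fun h => absurd hj h⟩
    · rw [hJ, Set.mem_setOf_eq] at hj
      push_neg at hj
      obtain ⟨v, hvT, k, hk⟩ := hj
      exact ⟨v, hvT, fun _ => ⟨k, hk⟩⟩
  choose g hgT hgW using hwit
  set x₀ : V := ∑ j, g j with hx₀
  have hx₀T : x₀ ∈ T := by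
    rw [hx₀]
    exact Finset.sum_induction g (· ∈ T) hTadd hTzero (fun j _ => hgT j)
  have hsuppJ : ∀ i, 0 < l i → i ∈ J := fun i hi v hv k => hv i hi k
  have hi₀J : i₀ ∈ J := hsuppJ i₀ hi₀pos
  have hnotJ : ∀ j, j ∉ J → ¬(∀ k, u j x₀ ≤ u k x₀) := by
    intro j hj hcon
    obtain ⟨k, hk⟩ := hgW j hj
    have hstrict : u i₀ x₀ < u j x₀ := by
      rw [hx₀, map_sum, map_sum]
      refine Finset.sum_lt_sum (fun m _ => hi₀J (g m) (hgT m) j) ?_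
      exact ⟨j, Finset.mem_univ j, lt_of_le_of_lt (hi₀J (g j) (hgT j) k) hk⟩
    exact absurd (hcon i₀) (not_le.2 hstrict)
  have hTK : T = Kset u x₀ := by
    ext v
    constructor
    · intro hv i hmin_i k
      have hiJ : i ∈ J := by
        by_contra h
        exact hnotJ i h hmin_i
      exact hiJ v hv k
    · intro hv i hi k
      exact hv i (fun m => hsuppJ i hi x₀ hx₀T m) k
  rw [hTK, ← cone_eq_Kset u x₀]
  exact ⟨_, ⟨x₀, rfl⟩, rfl⟩

end Aux

/-- For a nonempty finite family `u : S → W` in the dual `W` of a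
finite-dimensional real vector space `V`:
(a) for every face `σ` of the dual cone `C(u)` of `D(u)` with `(0,1) ∉ σ`, the
projection `π(σ) ⊆ V` is a cone of the normal fan `Σ(u)` of `P(u)`;
(b) every cone `σ' ∈ Σ(u)` arises this way from a unique face `σ` of `C(u)` with
`(0,1) ∉ σ`. -/
theorem stmt14 (u : S → Module.Dual ℝ V) :
    (∀ σ : Set (V × ℝ), IsFaceOfC u σ → ((0 : V), (1 : ℝ)) ∉ σ →
      (Prod.fst '' σ) ∈ normalFan u) ∧
    (∀ σ' ∈ normalFan u, ∃! σ : Set (V × ℝ),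
      IsFaceOfC u σ ∧ ((0 : V), (1 : ℝ)) ∉ σ ∧ Prod.fst '' σ = σ') := by
  classical
  refine ⟨fun σ hσ h01 => proj_mem_normalFan u hσ h01, ?_⟩
  rintro σ' ⟨Q, ⟨x₀, rfl⟩, rfl⟩
  -- the target cone is `Kset u x₀`
  have hKeq := cone_eq_Kset u x₀
  set I : Finset S := Finset.univ.filter (fun i => ∀ j, u i x₀ ≤ u j x₀) with hI
  have hIne : I.Nonempty := by
    obtain ⟨i₀, -, hi₀⟩ :=
      Finset.exists_min_image Finset.univ (fun i => u i x₀) Finset.univ_nonempty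
    exact ⟨i₀, Finset.mem_filter.2 ⟨Finset.mem_univ _, fun j => hi₀ j (Finset.mem_univ j)⟩⟩
  set φ : (V × ℝ) →ₗ[ℝ] ℝ :=
    (∑ i ∈ I, (u i).comp (LinearMap.fst ℝ V ℝ)) + (I.card : ℝ) • (LinearMap.snd ℝ V ℝ)
    with hφdef
  have hφapp : ∀ x : V × ℝ, φ x = ∑ i ∈ I, (u i x.1 + x.2) := by
    intro x
    rw [hφdef]
    simp only [LinearMap.add_apply, LinearMap.sum_apply, LinearMap.coe_comp,
      Function.comp_apply, LinearMap.fst_apply, LinearMap.smul_apply, LinearMap.snd_apply,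
      smul_eq_mul]
    rw [Finset.sum_add_distrib, Finset.sum_const, nsmul_eq_mul]
  have hφ0 : ∀ x ∈ Ccone u, 0 ≤ φ x := by
    intro x hx
    rw [hφapp]
    exact Finset.sum_nonneg fun i _ => (mem_Ccone_iff u x).1 hx i
  set σ : Set (V × ℝ) := Ccone u ∩ {x | φ x = 0} with hσdef
  have hface : IsFaceOfC u σ := Or.inr ⟨φ, hφ0, rfl⟩
  have hnot : ((0 : V), (1 : ℝ)) ∉ σ := by
    rintro ⟨-, h0⟩
    have : φ ((0 : V), (1 : ℝ)) = (I.card : ℝ) := by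
      rw [hφapp]
      simp
    rw [Set.mem_setOf_eq, this] at h0
    have := Finset.card_pos.2 hIne
    exact absurd h0 (by positivity)
  have hproj : Prod.fst '' σ = Kset u x₀ := by
    ext v
    constructor
    · rintro ⟨⟨x, t⟩, ⟨hxC, hx0⟩, rfl⟩
      intro i hi k
      dsimp only
      have hge : ∀ j, 0 ≤ u j x + t := fun j => (mem_Ccone_iff u _).1 hxC j
      rw [Set.mem_setOf_eq, hφapp] at hx0
      have hz := (Finset.sum_eq_zero_iff_of_nonneg fun j _ => hge j).1 hx0
      have hiI : i ∈ I := Finset.mem_filter.2 ⟨Finset.mem_univ _, hi⟩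
      have h1 := hz i hiI
      have h2 := hge k
      linarith
    · intro hv
      obtain ⟨i₀, hi₀I⟩ := hIne
      have hi₀min : ∀ j, u i₀ x₀ ≤ u j x₀ := (Finset.mem_filter.1 hi₀I).2
      refine ⟨(v, -(u i₀ v)), ⟨?_, ?_⟩, rfl⟩
      · rw [mem_Ccone_iff]
        intro j
        have := hv i₀ hi₀min j
        dsimp only
        linarith
      · rw [Set.mem_setOf_eq, hφapp]
        refine Finset.sum_eq_zero fun i hiI => ?_
        have h1 := hv i (Finset.mem_filter.1 hiI).2 i₀
        have h2 := hv i₀ hi₀min i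
        dsimp only
        linarith
  refine ⟨σ, ⟨hface, hnot, by rw [hproj, ← hKeq]⟩, ?_⟩
  rintro τ ⟨hτf, hτn, hτp⟩
  have hp2 : Prod.fst '' σ = Prod.fst '' τ := by
    rw [hproj, ← hKeq, ← hτp]
  exact Set.Subset.antisymm
    (face_proj_subset u hτf hτn hface hnot (by rw [← hp2]))
    (face_proj_subset u hface hnot hτf hτn (by rw [hp2]))
end
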